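/- Let A ∈ M_n and α ∈ [0, π/2). If the block matrix [[sec(α)·Re A, A*],[A, sec(α)·Re A]] is positive semidefinite, then the numerical range W(A) is contained in the sector S_α. -/

import Mathlib

open Matrix Set ComplexOrder

variable {m : Type*}

/-- The modulus `|X| = (XᴴX)^{1/2}` of a matrix. -/
noncomputable def matAbs [Fintype m] [DecidableEq m] (X : Matrix m m ℂ) : Matrix m m ℂ :=
  ((Matrix.posSemidef_conjTranspose_mul_self X).1.eigenvectorUnitary : Matrix m m ℂ) *
    Matrix.diagonal ((↑) ∘ (√·) ∘ (Matrix.posSemidef_conjTranspose_mul_self X).1.eigenvalues) *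
    (star (Matrix.posSemidef_conjTranspose_mul_self X).1.eigenvectorUnitary : Matrix m m ℂ)

theorem matAbs_posSemidef [Fintype m] [DecidableEq m] (X : Matrix m m ℂ) :
    (matAbs X).PosSemidef := by
  unfold matAbs
  apply PosSemidef.mul_mul_conjTranspose_same
  refine PosSemidef.diagonal fun i => ?_
  simp only [Function.comp_apply, Pi.zero_apply]
  exact_mod_cast Real.sqrt_nonneg _

/-- Functional calculus: apply `f : ℝ → ℝ` to a Hermitian matrix via its spectral
decomposition (junk value `0` for non-Hermitian input). -/
noncomputable def matFun [Fintype m] [DecidableEq m] (f : ℝ → ℝ) (X : Matrix m m ℂ) :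
    Matrix m m ℂ :=
  if h : X.IsHermitian then
    (h.eigenvectorUnitary : Matrix m m ℂ) *
      Matrix.diagonal (fun i => (f (h.eigenvalues i) : ℂ)) *
      star (h.eigenvectorUnitary : Matrix m m ℂ)
  else 0

/-- Real part `Re A = (A + Aᴴ)/2`. -/
noncomputable def reM (A : Matrix m m ℂ) : Matrix m m ℂ := (1/2 : ℂ) • (A + Aᴴ)

/-- Imaginary part `Im A = (A - Aᴴ)/(2i)`. -/
noncomputable def imM (A : Matrix m m ℂ) : Matrix m m ℂ := (1/(2*Complex.I)) • (A - Aᴴ)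

/-- Numerical range `W(A) = {x* A x : x*x = 1}`. -/
def numRange [Fintype m] (A : Matrix m m ℂ) : Set ℂ :=
  {z | ∃ x : m → ℂ, star x ⬝ᵥ x = 1 ∧ z = star x ⬝ᵥ A.mulVec x}

/-- The sector `S_α = {z : Re z ≥ 0, |Im z| ≤ (Re z) tan α}`. -/
def sector (α : ℝ) : Set ℂ := {z | 0 ≤ z.re ∧ |z.im| ≤ z.re * Real.tan α}

/-!
For `w = x* A x`, test the block matrix against `(x, -u x)`, where `|u| = 1` rotates `w` onto the
positive real axis: the off-diagonal blocks contribute `-2|w|` and the diagonal ones `2 sec α Re w`,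
so `cos α · |w| ≤ Re w`, which is exactly the statement that `w` lies in `S_α`.
-/

namespace Matrix

variable {R n : Type*} [Fintype m] [Fintype n] [CommSemiring R] [StarRing R]

theorem dotProduct_fromBlocks_mulVec_sumElim (A : Matrix m m R) (B : Matrix m n R)
    (C : Matrix n m R) (D : Matrix n n R) (x : m → R) (y : n → R) :
    star (Sum.elim x y) ⬝ᵥ fromBlocks A B C D *ᵥ Sum.elim x y =
      star x ⬝ᵥ A *ᵥ x + star x ⬝ᵥ B *ᵥ y + (star y ⬝ᵥ C *ᵥ x + star y ⬝ᵥ D *ᵥ y) := by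
  rw [Function.star_sumElim, fromBlocks_mulVec, sumElim_dotProduct_sumElim, dotProduct_add,
    dotProduct_add, Sum.elim_comp_inl, Sum.elim_comp_inr]

theorem dotProduct_conjTranspose_mulVec (B : Matrix m m R) (x : m → R) :
    star x ⬝ᵥ Bᴴ *ᵥ x = star (star x ⬝ᵥ B *ᵥ x) := by
  rw [star_dotProduct, star_mulVec, dotProduct_mulVec, conjTranspose_conjTranspose]

theorem PosSemidef.norm_dotProduct_mulVec_le_of_fromBlocks {P B : Matrix m m ℂ}
    (h : (fromBlocks P Bᴴ B P).PosSemidef) (x : m → ℂ) :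
    ‖star x ⬝ᵥ B *ᵥ x‖ ≤ (star x ⬝ᵥ P *ᵥ x).re := by
  set w := star x ⬝ᵥ B *ᵥ x
  set u := Complex.exp (w.arg * Complex.I)
  have hu : star u * u = 1 := by
    rw [Complex.star_def, ← Complex.normSq_eq_conj_mul_self, Complex.normSq_eq_norm_sq,
      Complex.norm_exp_ofReal_mul_I, one_pow, Complex.ofReal_one]
  have hw : star u * w = ‖w‖ :=
    calc star u * w = star u * (‖w‖ * u) := congrArg _ (Complex.norm_mul_exp_arg_mul_I w).symm
      _ = ‖w‖ := by rw [mul_left_comm, hu, mul_one]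
  have hw' : u * star w = ‖w‖ := by
    simpa [mul_comm] using congrArg star hw
  have key : (0 : ℂ) ≤ 2 * (star x ⬝ᵥ P *ᵥ x - ‖w‖) := by
    convert h.dotProduct_mulVec_nonneg (Sum.elim x (-u • x)) using 1
    rw [dotProduct_fromBlocks_mulVec_sumElim]
    simp only [neg_smul, mulVec_neg, mulVec_smul, dotProduct_neg, dotProduct_smul, star_neg,
      star_smul, neg_dotProduct, smul_dotProduct, dotProduct_conjTranspose_mulVec, smul_eq_mul]
    linear_combination -(star x ⬝ᵥ P *ᵥ x) * hu + hw + hw'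
  have hre := (Complex.le_def.mp key).1
  simp only [Complex.zero_re, Complex.re_ofNat, Complex.mul_re, Complex.sub_re,
    Complex.ofReal_re, Complex.im_ofNat, zero_mul, sub_zero] at hre
  linarith

end Matrix

theorem re_dotProduct_reM_mulVec [Fintype m] (A : Matrix m m ℂ) (x : m → ℂ) :
    (star x ⬝ᵥ reM A *ᵥ x).re = (star x ⬝ᵥ A *ᵥ x).re := by
  rw [reM, smul_mulVec, add_mulVec, dotProduct_smul, dotProduct_add,
    dotProduct_conjTranspose_mulVec, Complex.star_def, Complex.add_conj, smul_eq_mul]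
  simp

theorem mem_sector_of_cos_mul_norm_le {α : ℝ} {z : ℂ} (hα₀ : 0 ≤ α) (hα₁ : α < Real.pi / 2)
    (h : Real.cos α * ‖z‖ ≤ z.re) : z ∈ sector α := by
  have hcos : 0 < Real.cos α := Real.cos_pos_of_mem_Ioo ⟨by linarith [Real.pi_pos], hα₁⟩
  have hsin : 0 ≤ Real.sin α := Real.sin_nonneg_of_nonneg_of_le_pi hα₀ (by linarith)
  have hre : 0 ≤ z.re := (mul_nonneg hcos.le (norm_nonneg z)).trans h
  refine ⟨hre, ?_⟩
  rw [Real.tan_eq_sin_div_cos, mul_div_assoc', le_div_iff₀ hcos,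
    ← sq_le_sq₀ (by positivity) (by positivity)]
  have hsq : (Real.cos α * ‖z‖) ^ 2 ≤ z.re ^ 2 := pow_le_pow_left₀ (by positivity) h 2
  nlinarith [Real.sin_sq_add_cos_sq α, Complex.sq_norm_sub_sq_re z, sq_abs z.im]

theorem sec_block_psd_implies_sector {n : ℕ} (A : Matrix (Fin n) (Fin n) ℂ) (α : ℝ)
    (hα₀ : 0 ≤ α) (hα₁ : α < Real.pi / 2)
    (h : (Matrix.fromBlocks ((Real.cos α)⁻¹ • reM A) Aᴴ A
      ((Real.cos α)⁻¹ • reM A)).PosSemidef) :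
    numRange A ⊆ sector α := by
  rintro z ⟨x, -, rfl⟩
  have hcos : 0 < Real.cos α := Real.cos_pos_of_mem_Ioo ⟨by linarith [Real.pi_pos], hα₁⟩
  apply mem_sector_of_cos_mul_norm_le hα₀ hα₁
  have hbound := h.norm_dotProduct_mulVec_le_of_fromBlocks x
  rwa [smul_mulVec, dotProduct_smul, Complex.real_smul, Complex.re_ofReal_mul,
    re_dotProduct_reM_mulVec, le_inv_mul_iff₀ hcos] at hbound
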